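/- Let ε > 0, let K₁, K₂ be symmetric positive definite n×n matrices, and set Ŝ = (ε/8)·K₂^{−1/2}·(−ε·I + (ε²·I + 16·K₂^{1/2} K₁ K₂^{1/2})^{1/2})·K₂^{−1/2} and Mᵉ = I + (I + (16/ε²)·K₁^{1/2} K₂ K₁^{1/2})^{1/2}. Then the matrix K₂^{1/2}(K₁ − Ŝ)K₂^{1/2} is symmetric positive semidefinite and Tr( (K₂^{1/2}(K₁ − Ŝ)K₂^{1/2})^{1/2} ) = (ε/4)·(Tr(Mᵉ) − 2n), and furthermore log det(K₁) − log det(Ŝ) = log det(Mᵉ) − n·log 2. -/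

import Mathlib

open Matrix
open scoped Classical

noncomputable section

/-- The unique symmetric positive semidefinite square root of a positive
semidefinite matrix (junk value `0` otherwise). -/
def sqrtm {n : ℕ} (A : Matrix (Fin n) (Fin n) ℝ) : Matrix (Fin n) (Fin n) ℝ :=
  if h : A.PosSemidef then
    (h.1.eigenvectorUnitary : Matrix (Fin n) (Fin n) ℝ) *
      diagonal ((↑) ∘ Real.sqrt ∘ h.1.eigenvalues) *
      (star h.1.eigenvectorUnitary : Matrix (Fin n) (Fin n) ℝ)
  else 0

end

/-!
Put `R = K₂^{1/2}`, `A = R K₁ R` and `B = (ε² I + 16 A)^{1/2}`. Conjugation by `R` turns `Ŝ` into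
`(ε/8)(B - ε I)`, and `B² = ε² I + 16 A` gives `R (K₁ - Ŝ) R = ((B - ε I)/4)²`. Here `B ≥ ε I`,
as `B - ε I` is `t ↦ √(ε² + t) - ε` applied to `16 A`, so the square root in question is `(B - ε I)/4`.
With `X = K₂^{1/2} K₁^{1/2}` we have `A = X Xᴴ` and `K₁^{1/2} K₂ K₁^{1/2} = Xᴴ X`, which are
orthogonally similar by the polar decomposition of `X`; hence `Mᵉ` is orthogonally similar to
`I + B/ε`. This gives the trace identity, and the determinant identity follows from
`det (B - ε I) · det (B + ε I) = 16ⁿ det A = 16ⁿ det K₁ det K₂`.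
-/

open scoped MatrixOrder

namespace Matrix

variable {n : ℕ}

lemma sqrtm_eq_cfc {A : Matrix (Fin n) (Fin n) ℝ} (hA : A.PosSemidef) :
    sqrtm A = cfc Real.sqrt A := by
  rw [hA.1.cfc_eq, sqrtm, dif_pos hA]
  simp only [IsHermitian.cfc, Unitary.conjStarAlgAut_apply]
  rfl

lemma sqrtm_eq_cfcSqrt {A : Matrix (Fin n) (Fin n) ℝ} (hA : A.PosSemidef) :
    sqrtm A = CFC.sqrt A := by
  rw [sqrtm_eq_cfc hA, CFC.sqrt_eq_real_sqrt A hA.nonneg, cfcₙ_eq_cfc]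

lemma posSemidef_sqrtm {A : Matrix (Fin n) (Fin n) ℝ} (hA : A.PosSemidef) :
    (sqrtm A).PosSemidef := by
  rw [sqrtm_eq_cfcSqrt hA, ← nonneg_iff_posSemidef]
  exact CFC.sqrt_nonneg A

lemma sqrtm_mul_self {A : Matrix (Fin n) (Fin n) ℝ} (hA : A.PosSemidef) :
    sqrtm A * sqrtm A = A := by
  rw [sqrtm_eq_cfcSqrt hA]
  exact CFC.sqrt_mul_sqrt_self A hA.nonneg

lemma IsHermitian.posSemidef_mul_self {B : Matrix (Fin n) (Fin n) ℝ} (hB : B.IsHermitian) :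
    (B * B).PosSemidef := by
  simpa only [hB.eq] using posSemidef_conjTranspose_mul_self B

lemma sqrtm_eq_of_mul_self_eq {A B : Matrix (Fin n) (Fin n) ℝ} (hB : B.PosSemidef)
    (hBA : B * B = A) : sqrtm A = B := by
  rw [sqrtm_eq_cfcSqrt (hBA ▸ hB.1.posSemidef_mul_self)]
  exact CFC.sqrt_unique hBA hB.nonneg

lemma isUnit_sqrtm {A : Matrix (Fin n) (Fin n) ℝ} (hA : A.PosDef) : IsUnit (sqrtm A) :=
  isUnit_of_mul_isUnit_left ((sqrtm_mul_self hA.posSemidef).symm ▸ hA.isUnit)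

lemma PosSemidef.sqrtm_mul_mul_sqrtm {A P : Matrix (Fin n) (Fin n) ℝ} (hA : A.PosSemidef)
    (hP : P.PosSemidef) : (sqrtm P * A * sqrtm P).PosSemidef := by
  simpa only [(posSemidef_sqrtm hP).1.eq] using hA.conjTranspose_mul_mul_same (sqrtm P)

lemma trace_conjTranspose_mul_mul {U : Matrix (Fin n) (Fin n) ℝ} (hU : Uᴴ * U = 1)
    (M : Matrix (Fin n) (Fin n) ℝ) : (Uᴴ * M * U).trace = M.trace := by
  rw [trace_mul_cycle, mul_eq_one_comm.mp hU, one_mul]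

lemma det_conjTranspose_mul_mul {U : Matrix (Fin n) (Fin n) ℝ} (hU : Uᴴ * U = 1)
    (M : Matrix (Fin n) (Fin n) ℝ) : (Uᴴ * M * U).det = M.det := by
  rw [det_mul, det_mul, mul_right_comm, ← det_mul, hU, det_one, one_mul]

lemma sqrtm_conjTranspose_mul_mul {U P : Matrix (Fin n) (Fin n) ℝ} (hU : Uᴴ * U = 1)
    (hP : P.PosSemidef) : sqrtm (Uᴴ * P * U) = Uᴴ * sqrtm P * U := by
  refine sqrtm_eq_of_mul_self_eq ((posSemidef_sqrtm hP).conjTranspose_mul_mul_same U) ?_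
  calc Uᴴ * sqrtm P * U * (Uᴴ * sqrtm P * U)
      = Uᴴ * (sqrtm P * (U * Uᴴ) * sqrtm P) * U := by simp only [mul_assoc]
    _ = Uᴴ * P * U := by rw [mul_eq_one_comm.mp hU, mul_one, sqrtm_mul_self hP]

lemma sqrtm_sq_smul {c : ℝ} (hc : 0 ≤ c) {P : Matrix (Fin n) (Fin n) ℝ} (hP : P.PosSemidef) :
    sqrtm (c ^ 2 • P) = c • sqrtm P := by
  refine sqrtm_eq_of_mul_self_eq ((posSemidef_sqrtm hP).smul hc) ?_
  rw [smul_mul_smul_comm, sqrtm_mul_self hP, sq]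

lemma posSemidef_sqrtm_sub_smul_one {Q : Matrix (Fin n) (Fin n) ℝ} (hQ : Q.PosSemidef)
    {c : ℝ} (hc : 0 ≤ c) :
    (sqrtm (c ^ 2 • (1 : Matrix (Fin n) (Fin n) ℝ) + Q) - c • 1).PosSemidef := by
  have hQsa : IsSelfAdjoint Q := hQ.1
  have hcfc : cfc (fun x => √(c ^ 2 + x) - c) Q
      = sqrtm (c ^ 2 • (1 : Matrix (Fin n) (Fin n) ℝ) + Q) - c • 1 := by
    rw [cfc_sub (fun x => √(c ^ 2 + x)) (fun _ => c) Q, cfc_const c Q,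
      cfc_comp' Real.sqrt (c ^ 2 + ·) Q, cfc_const_add _ _ Q, cfc_id' ℝ Q,
      sqrtm_eq_cfc ((PosSemidef.one.smul (sq_nonneg c)).add hQ),
      Algebra.algebraMap_eq_smul_one, Algebra.algebraMap_eq_smul_one]
  rw [← hcfc, ← nonneg_iff_posSemidef]
  refine cfc_nonneg fun x hx => ?_
  have hx : 0 ≤ x := spectrum_nonneg_of_nonneg hQ.nonneg hx
  have := Real.sqrt_le_sqrt (le_add_of_nonneg_right hx : c ^ 2 ≤ c ^ 2 + x)
  rw [Real.sqrt_sq hc] at this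
  linarith

/-- Polar decomposition: `X = U P` with `P = √(Xᴴ X)` and `U` orthogonal. -/
lemma exists_conjTranspose_mul_mul_eq {X : Matrix (Fin n) (Fin n) ℝ} (hX : IsUnit X) :
    ∃ U : Matrix (Fin n) (Fin n) ℝ, Uᴴ * U = 1 ∧ Uᴴ * (X * Xᴴ) * U = Xᴴ * X := by
  set P := sqrtm (Xᴴ * X)
  have hP : P.PosSemidef := posSemidef_sqrtm (posSemidef_conjTranspose_mul_self X)
  have hPP : P * P = Xᴴ * X := sqrtm_mul_self (posSemidef_conjTranspose_mul_self X)
  have hPu : IsUnit P.det := (isUnit_iff_isUnit_det P).mp <|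
    isUnit_of_mul_isUnit_left (hPP ▸ hX.star.mul hX : IsUnit (P * P))
  have hUh : (X * P⁻¹)ᴴ = P⁻¹ * Xᴴ := by
    rw [conjTranspose_mul, conjTranspose_nonsing_inv, hP.1.eq]
  have hUX : (X * P⁻¹)ᴴ * X = P := by
    rw [hUh, mul_assoc, ← hPP, ← mul_assoc, nonsing_inv_mul _ hPu, one_mul]
  refine ⟨X * P⁻¹, ?_, ?_⟩
  · rw [← mul_assoc, hUX, mul_nonsing_inv _ hPu]
  · calc (X * P⁻¹)ᴴ * (X * Xᴴ) * (X * P⁻¹) = ((X * P⁻¹)ᴴ * X) * ((X * P⁻¹)ᴴ * X)ᴴ := by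
          rw [conjTranspose_mul (X * P⁻¹)ᴴ, conjTranspose_conjTranspose]; simp only [mul_assoc]
      _ = Xᴴ * X := by rw [hUX, hP.1.eq, hPP]

lemma det_sub_smul_one_mul_det_add_smul_one {B Q : Matrix (Fin n) (Fin n) ℝ} {c : ℝ}
    (hB : B * B = c ^ 2 • 1 + Q) : (B - c • 1).det * (B + c • 1).det = Q.det := by
  rw [← det_mul]
  congr 1
  simp only [sub_mul, mul_add, hB, smul_mul_assoc, mul_smul_comm, one_mul, mul_one]
  module

section

variable {ε : ℝ} {A B : Matrix (Fin n) (Fin n) ℝ}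

lemma sub_smul_eq_mul_self_of_mul_self_eq (hB : B * B = ε ^ 2 • 1 + (16 : ℝ) • A) :
    A - (ε / 8) • (B - ε • 1) = ((1 / 4 : ℝ) • (B - ε • 1)) * ((1 / 4 : ℝ) • (B - ε • 1)) := by
  simp only [sub_mul, mul_sub, smul_mul_assoc, mul_smul_comm, one_mul, mul_one, hB]
  module

lemma sqrtm_one_add_smul (hε : 0 < ε) (hA : A.PosSemidef) :
    sqrtm (1 + (16 / ε ^ 2) • A) = ε⁻¹ • sqrtm (ε ^ 2 • 1 + (16 : ℝ) • A) := by
  rw [← sqrtm_sq_smul (inv_nonneg.2 hε.le) ((PosSemidef.one.smul (sq_nonneg ε)).add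
    (hA.smul (by norm_num)))]
  congr 1
  match_scalars <;> field_simp

lemma one_add_sqrtm_one_add_smul_conj (hε : 0 < ε) (hA : A.PosSemidef)
    {U : Matrix (Fin n) (Fin n) ℝ} (hU : Uᴴ * U = 1) :
    1 + sqrtm (1 + (16 / ε ^ 2) • (Uᴴ * A * U)) =
      Uᴴ * (1 + ε⁻¹ • sqrtm (ε ^ 2 • 1 + (16 : ℝ) • A)) * U := by
  have hconj : 1 + (16 / ε ^ 2) • (Uᴴ * A * U) = Uᴴ * (1 + (16 / ε ^ 2) • A) * U := by
    rw [mul_add, add_mul, mul_one, hU, mul_smul_comm, smul_mul_assoc]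
  rw [hconj, sqrtm_conjTranspose_mul_mul hU (PosSemidef.one.add (hA.smul (by positivity))),
    sqrtm_one_add_smul hε hA, mul_add, add_mul, mul_one, hU]

lemma exists_one_add_sqrtm_eq_conj (hε : 0 < ε) {K₁ K₂ : Matrix (Fin n) (Fin n) ℝ}
    (hK₁ : K₁.PosDef) (hK₂ : K₂.PosDef) :
    ∃ U : Matrix (Fin n) (Fin n) ℝ, Uᴴ * U = 1 ∧
      1 + sqrtm (1 + (16 / ε ^ 2) • (sqrtm K₁ * K₂ * sqrtm K₁)) =
        Uᴴ * (1 + ε⁻¹ • sqrtm (ε ^ 2 • 1 + (16 : ℝ) • (sqrtm K₂ * K₁ * sqrtm K₂))) * U := by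
  set R₁ := sqrtm K₁
  set R₂ := sqrtm K₂
  have hR₁ : R₁ᴴ = R₁ := (posSemidef_sqrtm hK₁.posSemidef).1.eq
  have hR₂ : R₂ᴴ = R₂ := (posSemidef_sqrtm hK₂.posSemidef).1.eq
  have hR₁R₁ : R₁ * R₁ = K₁ := sqrtm_mul_self hK₁.posSemidef
  have hR₂R₂ : R₂ * R₂ = K₂ := sqrtm_mul_self hK₂.posSemidef
  have hXXh : (R₂ * R₁) * (R₂ * R₁)ᴴ = R₂ * K₁ * R₂ := by
    rw [conjTranspose_mul, hR₁, hR₂, mul_assoc, ← mul_assoc R₁, hR₁R₁, ← mul_assoc]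
  have hXhX : (R₂ * R₁)ᴴ * (R₂ * R₁) = R₁ * K₂ * R₁ := by
    rw [conjTranspose_mul, hR₁, hR₂, mul_assoc, ← mul_assoc R₂, hR₂R₂, ← mul_assoc]
  obtain ⟨U, hU, hconj⟩ :=
    exists_conjTranspose_mul_mul_eq (X := R₂ * R₁) ((isUnit_sqrtm hK₂).mul (isUnit_sqrtm hK₁))
  rw [hXXh, hXhX] at hconj
  exact ⟨U, hU, hconj ▸ one_add_sqrtm_one_add_smul_conj hε
    (hK₁.posSemidef.sqrtm_mul_mul_sqrtm hK₂.posSemidef) hU⟩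

lemma det_mul_det_eq_two_pow_mul_det (hε : 0 < ε) {K R S M U : Matrix (Fin n) (Fin n) ℝ}
    (hR : IsUnit R.det) (hB : B * B = ε ^ 2 • 1 + (16 : ℝ) • (R * K * R))
    (hRSR : R * S * R = (ε / 8) • (B - ε • 1)) (hU : Uᴴ * U = 1)
    (hM : M = Uᴴ * (1 + ε⁻¹ • B) * U) :
    S.det * M.det = 2 ^ n * K.det := by
  have hdetS : R.det ^ 2 * S.det = (ε / 8) ^ n * (B - ε • 1).det := by
    have := congrArg det hRSR
    rw [det_mul, det_mul, det_smul, Fintype.card_fin] at this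
    linear_combination this
  have hdetM : ε ^ n * M.det = (B + ε • 1).det := by
    have hεM : B + ε • 1 = ε • (1 + ε⁻¹ • B) := by
      rw [smul_add, smul_smul, mul_inv_cancel₀ hε.ne', one_smul, add_comm]
    rw [hεM, det_smul, Fintype.card_fin, hM, det_conjTranspose_mul_mul hU]
  have hdetB : (B - ε • 1).det * (B + ε • 1).det = 16 ^ n * (R.det ^ 2 * K.det) := by
    rw [det_sub_smul_one_mul_det_add_smul_one hB, det_smul, Fintype.card_fin, det_mul, det_mul]
    ring
  have h16 : (ε / 8) ^ n * 16 ^ n = 2 ^ n * ε ^ n := by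
    rw [← mul_pow, ← mul_pow]
    congr 1
    ring
  refine mul_right_cancel₀ (mul_ne_zero (pow_ne_zero n hε.ne') (pow_ne_zero 2 hR.ne_zero)) ?_
  linear_combination (ε ^ n * M.det) * hdetS + ((ε / 8) ^ n * (B - ε • 1).det) * hdetM +
    (ε / 8) ^ n * hdetB + (R.det ^ 2 * K.det) * h16

end

end Matrix

lemma Real.log_sub_log_eq_of_mul_eq {s m k c : ℝ} (hm : 0 < m) (hk : 0 < k) (hc : 0 < c) (n : ℕ)
    (h : s * m = c ^ n * k) : Real.log k - Real.log s = Real.log m - n * Real.log c := by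
  have hs : 0 < s := pos_of_mul_pos_left (h ▸ by positivity) hm.le
  have hlog := congrArg Real.log h
  rw [Real.log_mul hs.ne' hm.ne', Real.log_mul (by positivity) hk.ne', Real.log_pow] at hlog
  linarith

theorem stmt_19 {n : ℕ} (ε : ℝ) (hε : 0 < ε)
    (K₁ K₂ : Matrix (Fin n) (Fin n) ℝ) (hK₁ : K₁.PosDef) (hK₂ : K₂.PosDef)
    (S Me : Matrix (Fin n) (Fin n) ℝ)
    (hS : S = (ε / 8) • ((sqrtm K₂)⁻¹ *
      (-(ε • (1 : Matrix (Fin n) (Fin n) ℝ)) +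
        sqrtm (ε ^ 2 • (1 : Matrix (Fin n) (Fin n) ℝ) + (16 : ℝ) • (sqrtm K₂ * K₁ * sqrtm K₂))) *
      (sqrtm K₂)⁻¹))
    (hM : Me = 1 + sqrtm (1 + (16 / ε ^ 2) • (sqrtm K₁ * K₂ * sqrtm K₁))) :
    (sqrtm K₂ * (K₁ - S) * sqrtm K₂).PosSemidef ∧
      (sqrtm (sqrtm K₂ * (K₁ - S) * sqrtm K₂)).trace = (ε / 4) * (Me.trace - 2 * n) ∧
      Real.log K₁.det - Real.log S.det = Real.log Me.det - n * Real.log 2 := by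
  obtain ⟨U, hU, hMe⟩ := exists_one_add_sqrtm_eq_conj hε hK₁ hK₂
  rw [← hM] at hMe
  set R₂ := sqrtm K₂
  have hR₂u : IsUnit R₂.det := (isUnit_iff_isUnit_det R₂).mp (isUnit_sqrtm hK₂)
  set A := R₂ * K₁ * R₂
  have hA : A.PosSemidef := hK₁.posSemidef.sqrtm_mul_mul_sqrtm hK₂.posSemidef
  have hW : (ε ^ 2 • (1 : Matrix (Fin n) (Fin n) ℝ) + (16 : ℝ) • A).PosSemidef :=
    (PosSemidef.one.smul (sq_nonneg ε)).add (hA.smul (by norm_num))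
  set B := sqrtm (ε ^ 2 • (1 : Matrix (Fin n) (Fin n) ℝ) + (16 : ℝ) • A)
  have hB : B * B = ε ^ 2 • 1 + (16 : ℝ) • A := sqrtm_mul_self hW
  set N := (1 / 4 : ℝ) • (B - ε • 1)
  have hN : N.PosSemidef :=
    (posSemidef_sqrtm_sub_smul_one (hA.smul (by norm_num)) hε.le).smul (by norm_num)
  have hRSR : R₂ * S * R₂ = (ε / 8) • (B - ε • 1) := by
    rw [hS, mul_smul_comm, smul_mul_assoc, mul_assoc R₂⁻¹, mul_nonsing_inv_cancel_left _ _ hR₂u,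
      nonsing_inv_mul_cancel_right _ _ hR₂u, neg_add_eq_sub]
  have hNN : R₂ * (K₁ - S) * R₂ = N * N := by
    rw [mul_sub, sub_mul, hRSR]
    exact sub_smul_eq_mul_self_of_mul_self_eq hB
  refine ⟨hNN ▸ hN.1.posSemidef_mul_self, ?_, ?_⟩
  · rw [hNN, sqrtm_eq_of_mul_self_eq hN rfl, hMe, trace_conjTranspose_mul_mul hU]
    simp only [N, trace_add, trace_smul, trace_sub, trace_one, Fintype.card_fin, smul_eq_mul]
    field_simp
    ring
  · have hMe_pos : 0 < Me.det := by
      rw [hMe, det_conjTranspose_mul_mul hU]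
      exact (PosDef.one.add_posSemidef ((posSemidef_sqrtm hW).smul (inv_nonneg.2 hε.le))).det_pos
    exact Real.log_sub_log_eq_of_mul_eq hMe_pos hK₁.det_pos two_pos n
      (det_mul_det_eq_two_pow_mul_det hε hR₂u hB hRSR hU hMe)
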